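/- In the SBBA mechanism, the critical bid of a winning buyer equals the price he pays: when s_{k+1} ≤ b_k the price is s_{k+1} and a trading buyer exits the trade exactly when his bid falls below s_{k+1}; when s_{k+1} > b_k the price is b_k and a trading buyer (among the first k-1) exits exactly when his bid falls below b_k. -/
import Mathlib


open scoped Classical

/-! Formalization of the SBBA mechanism on raw bid profiles.
Sellers' asks `A` are sorted ascending and buyers' bids `B` descending using
`Tuple.sort` (which also provides a fixed tie-breaking order).  Ranks are 0-based:
the number of efficient deals `numDeals` is the largest `K` with
`sortedAsks (K-1) ≤ sortedBids (K-1)`; "`s (k+1)`" is `sortedAsks K` and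
"`b k`" is `sortedBids (K-1)`. -/

/-- The `i`-th lowest ask (0-based); arbitrary value `0` beyond the range. -/
noncomputable def sortedAsks {n : ℕ} (A : Fin n → ℝ) : ℕ → ℝ := fun i =>
  if h : i < n then A (Tuple.sort A ⟨i, h⟩) else 0

/-- The `i`-th highest bid (0-based); arbitrary value `0` beyond the range. -/
noncomputable def sortedBids {n : ℕ} (B : Fin n → ℝ) : ℕ → ℝ := fun i =>
  if h : i < n then B (Tuple.sort (fun j => -B j) ⟨i, h⟩) else 0

/-- `K`, the number of efficient deals: the number of positions where the sorted
ask is at most the sorted bid. -/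
noncomputable def numDeals {n : ℕ} (A B : Fin n → ℝ) : ℕ :=
  ((Finset.range n).filter fun i => sortedAsks A i ≤ sortedBids B i).card

/-- 0-based rank of seller `j` in the ascending order of asks. -/
noncomputable def sellerRank {n : ℕ} (A : Fin n → ℝ) (j : Fin n) : ℕ :=
  ((Tuple.sort A).symm j : ℕ)

/-- 0-based rank of buyer `j` in the descending order of bids. -/
noncomputable def buyerRank {n : ℕ} (B : Fin n → ℝ) (j : Fin n) : ℕ :=
  ((Tuple.sort (fun i => -B i)).symm j : ℕ)

/-- Case 1 of SBBA: `s (k+1) ≤ b k` (in particular `k ≥ 1` and `k < n`). -/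
def caseOne {n : ℕ} (A B : Fin n → ℝ) : Prop :=
  1 ≤ numDeals A B ∧ numDeals A B < n ∧
    sortedAsks A (numDeals A B) ≤ sortedBids B (numDeals A B - 1)

/-- The single SBBA trading price `min (s (k+1)) (b k)`:
`s (k+1)` in case 1, `b k` in case 2. -/
noncomputable def price {n : ℕ} (A B : Fin n → ℝ) : ℝ :=
  if caseOne A B then sortedAsks A (numDeals A B) else sortedBids B (numDeals A B - 1)

/-- Buyer `j` wins (trades with probability 1): in case 1 the first `K` buyers win,
in case 2 the first `K - 1` buyers win. -/
noncomputable def buyerWins {n : ℕ} (A B : Fin n → ℝ) (j : Fin n) : Prop :=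
  if caseOne A B then buyerRank B j < numDeals A B
  else buyerRank B j + 1 < numDeals A B

/-- Seller `j`'s probability of trading: `1` for the first `K` sellers in case 1,
`1 - 1/K` for them in case 2 (one of them, uniformly random, is excluded),
and `0` for all other sellers. -/
noncomputable def sellerProb {n : ℕ} (A B : Fin n → ℝ) (j : Fin n) : ℝ :=
  if sellerRank A j < numDeals A B then
    (if caseOne A B then 1 else 1 - 1 / (numDeals A B : ℝ))
  else 0

open Finset

/-- A downward-closed finset of `Fin n` is an initial segment. -/
lemma SBBA.mem_iff_lt_card {n : ℕ} {s : Finset (Fin n)}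
    (h : ∀ i i' : Fin n, i ≤ i' → i' ∈ s → i ∈ s) (i : Fin n) :
    i ∈ s ↔ (i : ℕ) < s.card := by
  constructor
  · intro hi
    have hsub : Finset.Iic i ⊆ s := fun i' hi' => h i' i (Finset.mem_Iic.mp hi') hi
    have h1 := Finset.card_le_card hsub
    rw [Fin.card_Iic] at h1
    omega
  · intro hi
    by_contra hmem
    have hsub : s ⊆ Finset.Iio i := fun i' hi' =>
      Finset.mem_Iio.mpr (lt_of_not_ge fun hle => hmem (h i i' hle hi'))
    have h1 := Finset.card_le_card hsub
    rw [Fin.card_Iio] at h1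
    omega

lemma SBBA.card_filter_comp {n : ℕ} (σ : Equiv.Perm (Fin n)) (P : Fin n → Prop) :
    (Finset.univ.filter fun i => P (σ i)).card = (Finset.univ.filter P).card := by
  rw [← Fintype.card_subtype, ← Fintype.card_subtype]
  exact Fintype.card_congr (σ.subtypeEquiv fun i => Iff.rfl)

lemma sortedAsks_mono {n : ℕ} (A : Fin n → ℝ) {i i' : ℕ} (h : i ≤ i') (h' : i' < n) :
    sortedAsks A i ≤ sortedAsks A i' := by
  have hi : i < n := lt_of_le_of_lt h h'
  simp only [sortedAsks, dif_pos hi, dif_pos h']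
  exact Tuple.monotone_sort A (show (⟨i, hi⟩ : Fin n) ≤ ⟨i', h'⟩ from h)

lemma sortedBids_anti {n : ℕ} (B : Fin n → ℝ) {i i' : ℕ} (h : i ≤ i') (h' : i' < n) :
    sortedBids B i' ≤ sortedBids B i := by
  have hi : i < n := lt_of_le_of_lt h h'
  simp only [sortedBids, dif_pos hi, dif_pos h']
  have := Tuple.monotone_sort (fun j => -B j) (show (⟨i, hi⟩ : Fin n) ≤ ⟨i', h'⟩ from h)
  simpa using this

lemma buyerRank_lt {n : ℕ} (B : Fin n → ℝ) (j : Fin n) : buyerRank B j < n :=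
  ((Tuple.sort (fun i => -B i)).symm j).isLt

lemma sortedBids_fin {n : ℕ} (B : Fin n → ℝ) (i : Fin n) :
    sortedBids B (i : ℕ) = B (Tuple.sort (fun k => -B k) i) := by
  simp only [sortedBids]
  rw [dif_pos i.isLt]

lemma sortedBids_buyerRank {n : ℕ} (B : Fin n → ℝ) (j : Fin n) :
    sortedBids B (buyerRank B j) = B j := by
  have := sortedBids_fin B ((Tuple.sort fun i => -B i).symm j)
  rw [Equiv.apply_symm_apply] at this
  exact this

/-- counting characterization of rank -/
lemma buyerRank_eq_card {n : ℕ} (B : Fin n → ℝ) (j : Fin n) :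
    buyerRank B j =
      (Finset.univ.filter fun i => B j < B i ∨ (B i = B j ∧ i < j)).card := by
  set σ := Tuple.sort (fun i => -B i) with hσ
  have hsort := (Tuple.eq_sort_iff (f := fun i => -B i) (σ := σ)).mp hσ
  obtain ⟨hmono, hties⟩ := hsort
  have key : ∀ p : Fin n, (B j < B (σ p) ∨ (B (σ p) = B j ∧ σ p < j)) ↔ p < σ.symm j := by
    intro p
    constructor
    · intro hc
      rcases lt_trichotomy p (σ.symm j) with h1 | h1 | h1
      · exact h1
      · exfalso; subst h1; rw [Equiv.apply_symm_apply] at hc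
        rcases hc with h | ⟨_, h⟩ <;> exact absurd h (lt_irrefl _)
      · exfalso
        have hm : -B (σ (σ.symm j)) ≤ -B (σ p) := hmono h1.le
        rw [Equiv.apply_symm_apply] at hm
        rcases hc with h | ⟨he, hlt⟩
        · linarith
        · have := hties (σ.symm j) p h1 (by rw [Equiv.apply_symm_apply]; simp [he])
          rw [Equiv.apply_symm_apply] at this
          exact absurd hlt (not_lt.mpr this.le)
    · intro hp
      have hm : -B (σ p) ≤ -B (σ (σ.symm j)) := hmono hp.le
      rw [Equiv.apply_symm_apply] at hm
      rcases eq_or_lt_of_le hm with he | hl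
      · right
        have hBe : B (σ p) = B j := by linarith [neg_injective he]
        refine ⟨hBe, ?_⟩
        have := hties p (σ.symm j) hp (by rw [Equiv.apply_symm_apply]; simp [hBe])
        rwa [Equiv.apply_symm_apply] at this
      · left; linarith
  have : buyerRank B j = (Finset.Iio (σ.symm j)).card := by rw [Fin.card_Iio]; rfl
  rw [this]
  apply Finset.card_bij (fun p _ => σ p)
  · intro p hp
    simp only [Finset.mem_filter, Finset.mem_univ, true_and]
    exact (key p).mpr (Finset.mem_Iio.mp hp)
  · intro p hp q hq h
    exact σ.injective h
  · intro i hi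
    simp only [Finset.mem_filter, Finset.mem_univ, true_and] at hi
    refine ⟨σ.symm i, ?_, Equiv.apply_symm_apply σ i⟩
    rw [Finset.mem_Iio]
    exact (key (σ.symm i)).mp (by rw [Equiv.apply_symm_apply]; exact hi)

noncomputable def cntGe {n : ℕ} (B : Fin n → ℝ) (v : ℝ) : ℕ :=
  (Finset.univ.filter fun i => v ≤ B i).card

noncomputable def cntGt {n : ℕ} (B : Fin n → ℝ) (v : ℝ) : ℕ :=
  (Finset.univ.filter fun i => v < B i).card

lemma le_sortedBids_iff {n : ℕ} (B : Fin n → ℝ) (v : ℝ) {i : ℕ} (h : i < n) :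
    v ≤ sortedBids B i ↔ i < cntGe B v := by
  set σ := Tuple.sort (fun k => -B k) with hσ
  have hanti : ∀ p q : Fin n, p ≤ q → B (σ q) ≤ B (σ p) := by
    intro p q hpq
    have := Tuple.monotone_sort (fun k => -B k) hpq
    simpa using this
  have hdc : ∀ p q : Fin n, p ≤ q → q ∈ (Finset.univ.filter fun p => v ≤ B (σ p)) →
      p ∈ (Finset.univ.filter fun p => v ≤ B (σ p)) := by
    intro p q hpq hq
    simp only [mem_filter, mem_univ, true_and] at hq ⊢
    exact le_trans hq (hanti p q hpq)
  have hmem := SBBA.mem_iff_lt_card hdc ⟨i, h⟩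
  simp only [mem_filter, mem_univ, true_and] at hmem
  have hcard : (Finset.univ.filter fun p => v ≤ B (σ p)).card = cntGe B v :=
    SBBA.card_filter_comp σ (fun i => v ≤ B i)
  rw [hcard] at hmem
  rw [sortedBids, dif_pos h]
  exact hmem

lemma lt_sortedBids_iff {n : ℕ} (B : Fin n → ℝ) (v : ℝ) {i : ℕ} (h : i < n) :
    v < sortedBids B i ↔ i < cntGt B v := by
  set σ := Tuple.sort (fun k => -B k) with hσ
  have hanti : ∀ p q : Fin n, p ≤ q → B (σ q) ≤ B (σ p) := by
    intro p q hpq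
    have := Tuple.monotone_sort (fun k => -B k) hpq
    simpa using this
  have hdc : ∀ p q : Fin n, p ≤ q → q ∈ (Finset.univ.filter fun p => v < B (σ p)) →
      p ∈ (Finset.univ.filter fun p => v < B (σ p)) := by
    intro p q hpq hq
    simp only [mem_filter, mem_univ, true_and] at hq ⊢
    exact lt_of_lt_of_le hq (hanti p q hpq)
  have hmem := SBBA.mem_iff_lt_card hdc ⟨i, h⟩
  simp only [mem_filter, mem_univ, true_and] at hmem
  have hcard : (Finset.univ.filter fun p => v < B (σ p)).card = cntGt B v :=
    SBBA.card_filter_comp σ (fun i => v < B i)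
  rw [hcard] at hmem
  rw [sortedBids, dif_pos h]
  exact hmem

lemma sortedBids_le_iff {n : ℕ} (B : Fin n → ℝ) (v : ℝ) {i : ℕ} (h : i < n) :
    sortedBids B i ≤ v ↔ cntGt B v ≤ i := by
  rw [← not_lt, ← not_lt, not_iff_not]
  exact lt_sortedBids_iff B v h

lemma numDeals_le_n {n : ℕ} (A B : Fin n → ℝ) : numDeals A B ≤ n :=
  le_trans (Finset.card_filter_le _ _) (by rw [Finset.card_range])

lemma lt_numDeals_iff {n : ℕ} (A B : Fin n → ℝ) {i : ℕ} (h : i < n) :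
    i < numDeals A B ↔ sortedAsks A i ≤ sortedBids B i := by
  have hcard : numDeals A B
      = (Finset.univ.filter fun p : Fin n => sortedAsks A ↑p ≤ sortedBids B ↑p).card := by
    rw [numDeals]
    apply Finset.card_bij (fun (i : ℕ) (hi : i ∈ _) => (⟨i, Finset.mem_range.mp (Finset.mem_filter.mp hi).1⟩ : Fin n))
    · intro i hi
      simp only [mem_filter, mem_univ, true_and]
      exact (Finset.mem_filter.mp hi).2
    · intro p hp q hq hpq
      simpa using congrArg Fin.val hpq
    · intro p hp
      simp only [mem_filter, mem_univ, true_and] at hp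
      exact ⟨(p : ℕ), Finset.mem_filter.mpr ⟨Finset.mem_range.mpr p.isLt, hp⟩, rfl⟩
  have hdc : ∀ p q : Fin n, p ≤ q →
      q ∈ (Finset.univ.filter fun p : Fin n => sortedAsks A ↑p ≤ sortedBids B ↑p) →
      p ∈ (Finset.univ.filter fun p : Fin n => sortedAsks A ↑p ≤ sortedBids B ↑p) := by
    intro p q hpq hq
    simp only [mem_filter, mem_univ, true_and] at hq ⊢
    calc sortedAsks A ↑p ≤ sortedAsks A ↑q := sortedAsks_mono A hpq q.isLt
      _ ≤ sortedBids B ↑q := hq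
      _ ≤ sortedBids B ↑p := sortedBids_anti B hpq q.isLt
  have hmem := SBBA.mem_iff_lt_card hdc ⟨i, h⟩
  simp only [mem_filter, mem_univ, true_and] at hmem
  rw [hcard]
  exact hmem.symm

lemma cntGe_update {n : ℕ} (B : Fin n → ℝ) (j : Fin n) (β v : ℝ) :
    cntGe (Function.update B j β) v =
      ((Finset.univ.filter fun i => v ≤ B i).erase j).card + (if v ≤ β then 1 else 0) := by
  have herase : (Finset.univ.filter fun i => v ≤ Function.update B j β i).erase j
      = (Finset.univ.filter fun i => v ≤ B i).erase j := by
    ext i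
    simp only [mem_erase, mem_filter, mem_univ, true_and]
    refine and_congr_right fun hne => ?_
    rw [Function.update_of_ne hne]
  rw [cntGe, ← herase]
  by_cases hv : v ≤ β
  · rw [if_pos hv]
    have hj : j ∈ (Finset.univ.filter fun i => v ≤ Function.update B j β i) := by
      simp [Function.update_self, hv]
    have hcard := Finset.card_erase_of_mem hj
    have hpos : 0 < (Finset.univ.filter fun i => v ≤ Function.update B j β i).card :=
      Finset.card_pos.mpr ⟨j, hj⟩
    omega
  · rw [if_neg hv]
    have hj : j ∉ (Finset.univ.filter fun i => v ≤ Function.update B j β i) := by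
      simp [Function.update_self, hv]
    rw [Finset.erase_eq_of_notMem hj, Nat.add_zero]

lemma cntGe_erase {n : ℕ} (B : Fin n → ℝ) (j : Fin n) (v : ℝ) :
    cntGe B v = ((Finset.univ.filter fun i => v ≤ B i).erase j).card
      + (if v ≤ B j then 1 else 0) := by
  have := cntGe_update B j (B j) v
  rwa [Function.update_eq_self] at this

lemma buyerRank_update_le {n : ℕ} (B : Fin n → ℝ) (j : Fin n) (β : ℝ) :
    buyerRank (Function.update B j β) j ≤ ((Finset.univ.filter fun i => β ≤ B i).erase j).card := by
  rw [buyerRank_eq_card]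
  apply Finset.card_le_card
  intro i hi
  simp only [mem_filter, mem_univ, true_and] at hi
  have hij : i ≠ j := by
    rintro rfl
    rcases hi with h | ⟨_, hlt⟩
    · exact lt_irrefl _ h
    · exact lt_irrefl _ hlt
  rw [Function.update_self, Function.update_of_ne hij] at hi
  simp only [mem_erase, mem_filter, mem_univ, true_and]
  refine ⟨hij, ?_⟩
  rcases hi with h | ⟨h, _⟩
  · exact le_of_lt h
  · exact le_of_eq h.symm

lemma le_buyerRank_update {n : ℕ} (B : Fin n → ℝ) (j : Fin n) {β v : ℝ} (h : β ≤ v) :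
    ((Finset.univ.filter fun i => v < B i).erase j).card
      ≤ buyerRank (Function.update B j β) j := by
  rw [buyerRank_eq_card]
  apply Finset.card_le_card
  intro i hi
  simp only [mem_erase, mem_filter, mem_univ, true_and] at hi
  obtain ⟨hij, hv⟩ := hi
  simp only [mem_filter, mem_univ, true_and]
  left
  rw [Function.update_self, Function.update_of_ne hij]
  exact lt_of_le_of_lt h hv


lemma SBBA.numDeals_mono_update {n : ℕ} (A B : Fin n → ℝ) (j : Fin n) (β : ℝ)
    (hK1 : 1 ≤ numDeals A B)
    (hβ : sortedAsks A (numDeals A B - 1) ≤ β) :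
    numDeals A B ≤ numDeals A (Function.update B j β) := by
  set K := numDeals A B with hK
  have hKn : K ≤ n := numDeals_le_n A B
  have hK1n : K - 1 < n := by omega
  have hab : sortedAsks A (K - 1) ≤ sortedBids B (K - 1) :=
    (lt_numDeals_iff A B hK1n).mp (by omega)
  have hcnt : K ≤ cntGe B (sortedAsks A (K - 1)) := by
    have := (le_sortedBids_iff B (sortedAsks A (K - 1)) hK1n).mp hab
    omega
  have hcnt' : K ≤ cntGe (Function.update B j β) (sortedAsks A (K - 1)) := by
    rw [cntGe_update B j β, if_pos hβ]
    have herase := cntGe_erase B j (sortedAsks A (K - 1))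
    have : cntGe B (sortedAsks A (K - 1)) ≤
        ((Finset.univ.filter fun i => sortedAsks A (K - 1) ≤ B i).erase j).card + 1 := by
      rw [herase]; split <;> omega
    omega
  have : K - 1 < numDeals A (Function.update B j β) := by
    rw [lt_numDeals_iff A _ hK1n]
    calc sortedAsks A (K - 1) ≤ sortedBids (Function.update B j β) (K - 1) := by
          rw [le_sortedBids_iff _ _ hK1n]; omega
    _ = _ := rfl
  omega

lemma SBBA.win_of_price_lt {n : ℕ} (A B : Fin n → ℝ) (j : Fin n) (β : ℝ)
    (hwin : buyerWins A B j) (hβ : price A B < β) :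
    buyerWins A (Function.update B j β) j := by
  set C := Function.update B j β with hC
  set K := numDeals A B with hK
  set r := buyerRank B j with hr0
  have hKn : K ≤ n := numDeals_le_n A B
  have hrn : r < n := buyerRank_lt B j
  by_cases hc1 : caseOne A B
  · -- Case 1: price = sortedAsks A K
    have hr : r < K := by
      rw [buyerWins, if_pos hc1] at hwin; exact hwin
    obtain ⟨hK1, hKlt, hcross⟩ := hc1
    rw [price, if_pos ⟨hK1, hKlt, hcross⟩] at hβ
    have hK1n : K - 1 < n := by omega
    -- b_K < a_K
    have hbK : ¬ sortedAsks A K ≤ sortedBids B K := by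
      intro hcon
      have := (lt_numDeals_iff A B hKlt).mpr hcon
      omega
    -- a_K ≤ B j
    have hBj : sortedAsks A K ≤ B j := by
      rw [← sortedBids_buyerRank B j]
      calc sortedAsks A K ≤ sortedBids B (K - 1) := hcross
        _ ≤ sortedBids B r := sortedBids_anti B (by omega) hK1n
    -- cntGe B a_K : between K and K
    have hcnt_le : cntGe B (sortedAsks A K) ≤ K := by
      have := (le_sortedBids_iff B (sortedAsks A K) hKlt).not.mp hbK
      omega
    have hcnt_ge : K ≤ cntGe B (sortedAsks A K) := by
      have := (le_sortedBids_iff B (sortedAsks A K) hK1n).mp hcross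
      omega
    -- K ≤ K'
    have hKK' : K ≤ numDeals A C := by
      apply SBBA.numDeals_mono_update A B j β hK1
      calc sortedAsks A (K - 1) ≤ sortedAsks A K := sortedAsks_mono A (by omega) hKlt
        _ ≤ β := le_of_lt hβ
    -- a_K ≤ b'_{K-1}
    have hb'K1 : sortedAsks A K ≤ sortedBids C (K - 1) := by
      rw [le_sortedBids_iff _ _ hK1n, hC, cntGe_update B j β, if_pos (le_of_lt hβ)]
      have herase := cntGe_erase B j (sortedAsks A K)
      rw [if_pos hBj] at herase
      omega
    -- r' ≤ K - 1
    have hr' : buyerRank C j ≤ K - 1 := by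
      have h1 := buyerRank_update_le B j β
      have hsub : (Finset.univ.filter fun i => β ≤ B i).erase j ⊆
          (Finset.univ.filter fun i => sortedAsks A K ≤ B i).erase j := by
        intro i hi
        simp only [Finset.mem_erase, Finset.mem_filter, Finset.mem_univ, true_and] at hi ⊢
        obtain ⟨hne, hle⟩ := hi
        exact ⟨hne, le_trans (le_of_lt hβ) hle⟩
      have h2 := Finset.card_le_card hsub
      have hjmem : j ∈ (Finset.univ.filter fun i => sortedAsks A K ≤ B i) := by
        simp only [Finset.mem_filter, Finset.mem_univ, true_and]; exact hBj
      have h3 := Finset.card_erase_of_mem hjmem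
      rw [← hC] at h1
      have hcntrfl : (Finset.univ.filter fun i => sortedAsks A K ≤ B i).card = cntGe B (sortedAsks A K) := rfl
      omega
    -- conclude
    by_cases hc1' : caseOne A C
    · rw [buyerWins, if_pos hc1']
      omega
    · rw [buyerWins, if_neg hc1']
      have hKK'' : K < numDeals A C := by
        rcases lt_or_eq_of_le hKK' with h | h
        · exact h
        · exfalso
          apply hc1'
          refine ⟨by omega, by omega, ?_⟩
          rw [← h]
          exact hb'K1
      omega
  · -- Case 2: price = sortedBids B (K-1)
    have hr : r + 1 < K := by
      rw [buyerWins, if_neg hc1] at hwin; exact hwin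
    rw [price, if_neg hc1] at hβ
    have hK2 : 2 ≤ K := by omega
    have hK1n : K - 1 < n := by omega
    have hBj : sortedBids B (K - 1) ≤ B j := by
      rw [← sortedBids_buyerRank B j]
      exact sortedBids_anti B (by omega) hK1n
    have hcnta : sortedAsks A (K - 1) ≤ sortedBids B (K - 1) :=
      (lt_numDeals_iff A B hK1n).mp (by omega)
    -- K ≤ K'
    have hKK' : K ≤ numDeals A C := by
      apply SBBA.numDeals_mono_update A B j β (by omega)
      linarith
    -- cntGt B b_{K-1} ≤ K - 1
    have hcntgt : cntGt B (sortedBids B (K - 1)) ≤ K - 1 := by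
      have := (sortedBids_le_iff B (sortedBids B (K - 1)) hK1n).mp le_rfl
      omega
    -- r' ≤ K - 2
    have hr' : buyerRank C j ≤ K - 2 := by
      have h1 := buyerRank_update_le B j β
      have hsub : (Finset.univ.filter fun i => β ≤ B i).erase j ⊆
          (Finset.univ.filter fun i => sortedBids B (K - 1) < B i).erase j := by
        intro i hi
        simp only [Finset.mem_erase, Finset.mem_filter, Finset.mem_univ, true_and] at hi ⊢
        obtain ⟨hne, hle⟩ := hi
        exact ⟨hne, lt_of_lt_of_le hβ hle⟩
      have h2 := Finset.card_le_card hsub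
      rw [← hC] at h1
      rcases eq_or_lt_of_le hBj with heq | hlt
      · -- B j = b_{K-1} : the count of strictly-bigger bids is at most r ≤ K-2
        have hbr : sortedBids B r = B j := sortedBids_buyerRank B j
        have : cntGt B (sortedBids B (K - 1)) ≤ r := by
          have := (sortedBids_le_iff B (sortedBids B (K - 1)) hrn).mp
            (by rw [hbr, ← heq])
          omega
        have h4 : ((Finset.univ.filter fun i => sortedBids B (K - 1) < B i).erase j).card
            ≤ cntGt B (sortedBids B (K - 1)) :=
          Finset.card_le_card (Finset.erase_subset _ _)
        omega
      · have hjmem : j ∈ (Finset.univ.filter fun i => sortedBids B (K - 1) < B i) := by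
          simp only [Finset.mem_filter, Finset.mem_univ, true_and]; exact hlt
        have h3 := Finset.card_erase_of_mem hjmem
        have h4 : (Finset.univ.filter fun i => sortedBids B (K - 1) < B i).card
            = cntGt B (sortedBids B (K - 1)) := rfl
        omega
    by_cases hc1' : caseOne A C
    · rw [buyerWins, if_pos hc1']; omega
    · rw [buyerWins, if_neg hc1']; omega

lemma SBBA.price_le_of_win {n : ℕ} (A B : Fin n → ℝ) (j : Fin n) (β : ℝ)
    (hwin : buyerWins A B j) (hwin' : buyerWins A (Function.update B j β) j) :
    price A B ≤ β := by
  by_contra hβ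
  push_neg at hβ
  set C := Function.update B j β with hC
  set K := numDeals A B with hK
  set r := buyerRank B j with hr0
  have hKn : K ≤ n := numDeals_le_n A B
  have hrn : r < n := buyerRank_lt B j
  have hb'rank : sortedBids C (buyerRank C j) = β := by
    rw [sortedBids_buyerRank C j, hC, Function.update_self]
  by_cases hc1 : caseOne A B
  · obtain ⟨hK1, hKlt, hcross⟩ := hc1
    have hr : r < K := by
      rw [buyerWins, if_pos ⟨hK1, hKlt, hcross⟩] at hwin; exact hwin
    rw [price, if_pos ⟨hK1, hKlt, hcross⟩] at hβ
    have hK1n : K - 1 < n := by omega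
    have hbK : ¬ sortedAsks A K ≤ sortedBids B K := by
      intro hcon
      have := (lt_numDeals_iff A B hKlt).mpr hcon
      omega
    have hBj : sortedAsks A K ≤ B j := by
      rw [← sortedBids_buyerRank B j]
      calc sortedAsks A K ≤ sortedBids B (K - 1) := hcross
        _ ≤ sortedBids B r := sortedBids_anti B (by omega) hK1n
    have hcnt_le : cntGe B (sortedAsks A K) ≤ K := by
      have := (le_sortedBids_iff B (sortedAsks A K) hKlt).not.mp hbK
      omega
    have hcnt_ge : K ≤ cntGe B (sortedAsks A K) := by
      have := (le_sortedBids_iff B (sortedAsks A K) hK1n).mp hcross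
      omega
    -- K' ≤ K
    have hK'K : numDeals A C ≤ K := by
      by_contra hcon
      push_neg at hcon
      have hab : sortedAsks A K ≤ sortedBids C K := (lt_numDeals_iff A C hKlt).mp hcon
      have := (le_sortedBids_iff C (sortedAsks A K) hKlt).mp hab
      rw [hC, cntGe_update B j β, if_neg (not_le.mpr hβ)] at this
      have hle : ((Finset.univ.filter fun i => sortedAsks A K ≤ B i).erase j).card
          ≤ cntGe B (sortedAsks A K) :=
        Finset.card_le_card (Finset.erase_subset _ _)
      omega
    -- K - 1 ≤ r'
    have hr'ge : K - 1 ≤ buyerRank C j := by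
      have h1 := le_buyerRank_update B j (le_refl β)
      have hsub : (Finset.univ.filter fun i => sortedAsks A K ≤ B i).erase j ⊆
          (Finset.univ.filter fun i => β < B i).erase j := by
        intro i hi
        simp only [Finset.mem_erase, Finset.mem_filter, Finset.mem_univ, true_and] at hi ⊢
        obtain ⟨hne, hle⟩ := hi
        exact ⟨hne, lt_of_lt_of_le hβ hle⟩
      have h2 := Finset.card_le_card hsub
      have hjmem : j ∈ (Finset.univ.filter fun i => sortedAsks A K ≤ B i) := by
        simp only [Finset.mem_filter, Finset.mem_univ, true_and]; exact hBj
      have h3 := Finset.card_erase_of_mem hjmem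
      rw [← hC] at h1
      have hcntrfl : (Finset.univ.filter fun i => sortedAsks A K ≤ B i).card = cntGe B (sortedAsks A K) := rfl
      omega
    by_cases hc1' : caseOne A C
    · rw [buyerWins, if_pos hc1'] at hwin'
      obtain ⟨_, _, hcross'⟩ := hc1'
      have heq1 : buyerRank C j = K - 1 := by omega
      have heq2 : numDeals A C = K := by omega
      rw [heq2] at hcross'
      rw [heq1] at hb'rank
      rw [hb'rank] at hcross'
      linarith
    · rw [buyerWins, if_neg hc1'] at hwin'
      omega
  · have hr : r + 1 < K := by
      rw [buyerWins, if_neg hc1] at hwin; exact hwin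
    rw [price, if_neg hc1] at hβ
    have hK2 : 2 ≤ K := by omega
    have hK1n : K - 1 < n := by omega
    have hBj : sortedBids B (K - 1) ≤ B j := by
      rw [← sortedBids_buyerRank B j]
      exact sortedBids_anti B (by omega) hK1n
    have hcase2 : K = n ∨ (K < n ∧ sortedBids B (K - 1) < sortedAsks A K) := by
      rcases lt_or_ge K n with h | h
      · right
        refine ⟨h, ?_⟩
        by_contra hcon
        push_neg at hcon
        exact hc1 ⟨by omega, h, hcon⟩
      · left; omega
    have hcnt_ge : K ≤ cntGe B (sortedBids B (K - 1)) := by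
      have := (le_sortedBids_iff B (sortedBids B (K - 1)) hK1n).mp le_rfl
      omega
    -- K' ≤ K
    have hK'K : numDeals A C ≤ K := by
      rcases hcase2 with h | ⟨hKlt, hba⟩
      · rw [h]; exact numDeals_le_n A C
      · by_contra hcon
        push_neg at hcon
        have hab : sortedAsks A K ≤ sortedBids C K := (lt_numDeals_iff A C hKlt).mp hcon
        have h5 := (le_sortedBids_iff C (sortedAsks A K) hKlt).mp hab
        rw [hC, cntGe_update B j β, if_neg (not_le.mpr (by linarith))] at h5
        have hle : ((Finset.univ.filter fun i => sortedAsks A K ≤ B i).erase j).card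
            ≤ cntGe B (sortedAsks A K) :=
          Finset.card_le_card (Finset.erase_subset _ _)
        have hcnt_le : cntGe B (sortedAsks A K) ≤ K - 1 := by
          have := (le_sortedBids_iff B (sortedAsks A K) hK1n).not.mp (not_le.mpr hba)
          omega
        omega
    -- K - 1 ≤ r'
    have hr'ge : K - 1 ≤ buyerRank C j := by
      have h1 := le_buyerRank_update B j (le_refl β)
      have hsub : (Finset.univ.filter fun i => sortedBids B (K - 1) ≤ B i).erase j ⊆
          (Finset.univ.filter fun i => β < B i).erase j := by
        intro i hi
        simp only [Finset.mem_erase, Finset.mem_filter, Finset.mem_univ, true_and] at hi ⊢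
        obtain ⟨hne, hle⟩ := hi
        exact ⟨hne, lt_of_lt_of_le hβ hle⟩
      have h2 := Finset.card_le_card hsub
      have hjmem : j ∈ (Finset.univ.filter fun i => sortedBids B (K - 1) ≤ B i) := by
        simp only [Finset.mem_filter, Finset.mem_univ, true_and]; exact hBj
      have h3 := Finset.card_erase_of_mem hjmem
      rw [← hC] at h1
      have hcntrfl : (Finset.univ.filter fun i => sortedBids B (K - 1) ≤ B i).card = cntGe B (sortedBids B (K - 1)) := rfl
      omega
    by_cases hc1' : caseOne A C
    · rw [buyerWins, if_pos hc1'] at hwin'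
      obtain ⟨_, hK'n, hcross'⟩ := hc1'
      have heq1 : buyerRank C j = K - 1 := by omega
      have heq2 : numDeals A C = K := by omega
      rw [heq2] at hcross' hK'n
      rw [heq1] at hb'rank
      rw [hb'rank] at hcross'
      rcases hcase2 with h | ⟨_, hba⟩
      · omega
      · linarith
    · rw [buyerWins, if_neg hc1'] at hwin'
      omega


/-- The critical bid of a winning buyer equals the price he pays: if buyer `j` wins,
then the infimum of the bids with which he still wins (all other reports fixed) equals
the SBBA price — `s (k+1)` when `s (k+1) ≤ b k`, and `b k` otherwise. -/
theorem sbba_buyer_critical_price {n : ℕ} (A B : Fin n → ℝ) (j : Fin n)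
    (hwin : buyerWins A B j) :
    sInf {β : ℝ | buyerWins A (Function.update B j β) j} = price A B := by
  have hub : ∀ β ∈ {β : ℝ | buyerWins A (Function.update B j β) j}, price A B ≤ β :=
    fun β hβ => SBBA.price_le_of_win A B j β hwin hβ
  have hmem : price A B + 1 ∈ {β : ℝ | buyerWins A (Function.update B j β) j} :=
    SBBA.win_of_price_lt A B j _ hwin (by linarith)
  have hbdd : BddBelow {β : ℝ | buyerWins A (Function.update B j β) j} :=
    ⟨price A B, fun β hβ => hub β hβ⟩
  apply le_antisymm
  · have hsub : Set.Ioi (price A B) ⊆ {β : ℝ | buyerWins A (Function.update B j β) j} :=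
      fun β hβ => SBBA.win_of_price_lt A B j β hwin hβ
    calc sInf {β : ℝ | buyerWins A (Function.update B j β) j}
        ≤ sInf (Set.Ioi (price A B)) :=
          csInf_le_csInf hbdd ⟨price A B + 1, by simp⟩ hsub
      _ = price A B := csInf_Ioi
  · exact le_csInf ⟨_, hmem⟩ hub
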